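/- Let Φ₁: G₁ → K and Φ₂: G₂ → K be synchronizing right-resolvers between finite graphs, let P = G₁ ×_{Φ₁,Φ₂} G₂, and let C be a principal subgraph of P such that the restricted state maps ∂Φ̂_i|_{V(C)}: V(C) → V(G_i) are surjective. Then the restrictions Φ̂_i|_C: C → G_i are synchronizing right-resolvers, so C is a common synchronizing extension of G₁ and G₂. -/

import Mathlib

/-- A finite directed multigraph. -/
structure FinGraph where
  V : Type
  E : Type
  [fintV : Fintype V]
  [fintE : Fintype E]
  [decV : DecidableEq V]
  [decE : DecidableEq E]
  src : E → V
  tgt : E → V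

attribute [instance] FinGraph.fintV FinGraph.fintE FinGraph.decV FinGraph.decE

/-- A graph homomorphism. -/
structure GHom (G H : FinGraph) where
  eMap : G.E → H.E
  vMap : G.V → H.V
  src_eq : ∀ e, H.src (eMap e) = vMap (G.src e)
  tgt_eq : ∀ e, H.tgt (eMap e) = vMap (G.tgt e)

def GHom.comp {G K H : FinGraph} (Δ : GHom K H) (Ψ : GHom G K) : GHom G H where
  eMap := Δ.eMap ∘ Ψ.eMap
  vMap := Δ.vMap ∘ Ψ.vMap
  src_eq := fun e => by
    simp only [Function.comp_apply, Δ.src_eq, Ψ.src_eq]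
  tgt_eq := fun e => by
    simp only [Function.comp_apply, Δ.tgt_eq, Ψ.tgt_eq]

/-- The restriction of a homomorphism to the outgoing edges of a state. -/
def outMap {G H : FinGraph} (Φ : GHom G H) (I : G.V) :
    {e : G.E // G.src e = I} → {f : H.E // H.src f = Φ.vMap I} :=
  fun e => ⟨Φ.eMap e.1, (Φ.src_eq e.1).trans (congrArg Φ.vMap e.2)⟩

/-- A right-resolver: a surjective homomorphism restricting to a bijection
on the outgoing edges of each state. -/
def IsRR {G H : FinGraph} (Φ : GHom G H) : Prop :=
  Function.Surjective Φ.vMap ∧ ∀ I : G.V, Function.Bijective (outMap Φ I)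

/-- `IsPathFrom H I u`: the edge list `u` is a path in `H` starting at `I`. -/
def IsPathFrom (H : FinGraph) : H.V → List H.E → Prop
  | _, [] => True
  | I, e :: u => H.src e = I ∧ IsPathFrom H (H.tgt e) u

/-- The terminal state of a path starting at `I`. -/
def pathEnd (H : FinGraph) (I : H.V) (u : List H.E) : H.V :=
  u.foldl (fun _ e => H.tgt e) I

/-- One-step transition: `I · a` is the target of the unique edge at `I`
lifting `a` (when `Φ` is right-resolving and `a` starts at the image of `I`). -/
noncomputable def step {G H : FinGraph} (Φ : GHom G H) (I : G.V) (a : H.E) : G.V :=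
  if h : ∃ e : G.E, G.src e = I ∧ Φ.eMap e = a then G.tgt h.choose else I

/-- Transition along a word: `I · u`. -/
noncomputable def transPath {G H : FinGraph} (Φ : GHom G H) (I : G.V) (u : List H.E) : G.V :=
  u.foldl (step Φ) I

/-- The stability relation of a right-resolver. -/
def Stable {G H : FinGraph} (Φ : GHom G H) (I₁ I₂ : G.V) : Prop :=
  Φ.vMap I₁ = Φ.vMap I₂ ∧
  ∀ u : List H.E, IsPathFrom H (Φ.vMap I₁) u →
    ∃ v : List H.E, IsPathFrom H (pathEnd H (Φ.vMap I₁) u) v ∧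
      transPath Φ I₁ (u ++ v) = transPath Φ I₂ (u ++ v)

/-- A right-resolver is synchronizing if each fiber of its state map is a
single stability class. -/
def Synchronizing {G H : FinGraph} (Φ : GHom G H) : Prop :=
  ∀ I₁ I₂ : G.V, Φ.vMap I₁ = Φ.vMap I₂ → Stable Φ I₁ I₂

/-- The fiber of the state map over a state of the codomain. -/
def fiber {G H : FinGraph} (Φ : GHom G H) (I : H.V) : Set G.V := {J | Φ.vMap J = I}

/-- The image `U · u` of a set of states under transition along a word. -/
noncomputable def setTrans {G H : FinGraph} (Φ : GHom G H) (U : Set G.V)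
    (u : List H.E) : Set G.V :=
  (fun J => transPath Φ J u) '' U

/-- A minimal image of a right-resolver. -/
def IsMinImage {G H : FinGraph} (Φ : GHom G H) (U : Set G.V) : Prop :=
  ∃ (I : H.V) (u : List H.E), IsPathFrom H I u ∧ U = setTrans Φ (fiber Φ I) u ∧
    ∀ v : List H.E, IsPathFrom H (pathEnd H I u) v →
      (setTrans Φ U v).ncard = U.ncard

/-- Strong connectedness: a directed path between every ordered pair of states. -/
def StronglyConnected (G : FinGraph) : Prop :=
  ∀ I J : G.V, ∃ u : List G.E, IsPathFrom G I u ∧ pathEnd G I u = J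

/-- The fiber product of two homomorphisms into a common codomain. -/
def fiberProd {H₁ H₂ K : FinGraph} (Ψ₁ : GHom H₁ K) (Ψ₂ : GHom H₂ K) : FinGraph where
  V := {p : H₁.V × H₂.V // Ψ₁.vMap p.1 = Ψ₂.vMap p.2}
  E := {q : H₁.E × H₂.E // Ψ₁.eMap q.1 = Ψ₂.eMap q.2}
  src := fun q => ⟨(H₁.src q.1.1, H₂.src q.1.2), by
    rw [← Ψ₁.src_eq, ← Ψ₂.src_eq, q.2]⟩
  tgt := fun q => ⟨(H₁.tgt q.1.1, H₂.tgt q.1.2), by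
    rw [← Ψ₁.tgt_eq, ← Ψ₂.tgt_eq, q.2]⟩

/-- First coordinate projection of the fiber product. -/
def fpProj₁ {H₁ H₂ K : FinGraph} (Ψ₁ : GHom H₁ K) (Ψ₂ : GHom H₂ K) :
    GHom (fiberProd Ψ₁ Ψ₂) H₁ where
  eMap := fun q => q.1.1
  vMap := fun p => p.1.1
  src_eq := fun _ => rfl
  tgt_eq := fun _ => rfl

/-- Second coordinate projection of the fiber product. -/
def fpProj₂ {H₁ H₂ K : FinGraph} (Ψ₁ : GHom H₁ K) (Ψ₂ : GHom H₂ K) :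
    GHom (fiberProd Ψ₁ Ψ₂) H₂ where
  eMap := fun q => q.1.2
  vMap := fun p => p.1.2
  src_eq := fun _ => rfl
  tgt_eq := fun _ => rfl

/-- The principal subgraph of P induced by a follower-closed set S of states. -/
noncomputable def restrict (P : FinGraph) (S : Set P.V)
    (hS : ∀ e : P.E, P.src e ∈ S → P.tgt e ∈ S) : FinGraph where
  V := S
  E := {e : P.E // P.src e ∈ S}
  fintV := (Set.toFinite S).fintype
  fintE := (Set.toFinite {e : P.E | P.src e ∈ S}).fintype
  decV := Classical.decEq _
  decE := Classical.decEq _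
  src := fun e => ⟨P.src e.1, e.2⟩
  tgt := fun e => ⟨P.tgt e.1, hS e.1 e.2⟩

/-- The inclusion of a principal subgraph. -/
noncomputable def inclHom (P : FinGraph) (S : Set P.V)
    (hS : ∀ e : P.E, P.src e ∈ S → P.tgt e ∈ S) : GHom (restrict P S hS) P where
  eMap := fun e => e.1
  vMap := fun v => v.1
  src_eq := fun _ => rfl
  tgt_eq := fun _ => rfl

/-!
The restricted projections inherit right-resolvingness from the other factor: an out-edge `a`
of `π₁ p` maps to `Φ₁ a`, which lifts uniquely through `Φ₂` to an out-edge `b` of `π₂ p`, and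
`(a, b)` is an out-edge of `p` in `C` because `C` is principal. For synchronization, follow a
path `u` from `p` and `q` with `π₁ p = π₁ q`: the first coordinates agree all along, and the
second coordinates follow the `Φ₂`-transitions along `Φ₁ u`, ending in one `Φ₂`-fiber. Since
`Φ₂` is synchronizing they are brought together by some word `w`, which lifts through `Φ₁` to
a path `v`; then `p · uv` and `q · uv` agree in both coordinates, hence are equal.
-/

section Paths

variable {G H : FinGraph} (Φ : GHom G H)

theorem transPath_append (I : G.V) (u v : List H.E) :
    transPath Φ I (u ++ v) = transPath Φ (transPath Φ I u) v :=
  List.foldl_append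

theorem IsPathFrom.append {I : G.V} {u v : List G.E}
    (hu : IsPathFrom G I u) (hv : IsPathFrom G (pathEnd G I u) v) :
    IsPathFrom G I (u ++ v) := by
  induction u generalizing I with
  | nil => exact hv
  | cons e u ih => exact ⟨hu.1, ih hu.2 hv⟩

theorem step_eq_tgt (hinj : ∀ I, Function.Injective (outMap Φ I))
    {I : G.V} {e : G.E} (he : G.src e = I) :
    step Φ I (Φ.eMap e) = G.tgt e := by
  have hex : ∃ e' : G.E, G.src e' = I ∧ Φ.eMap e' = Φ.eMap e := ⟨e, he, rfl⟩
  have hchoose : hex.choose = e :=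
    congrArg Subtype.val (hinj I (a₁ := ⟨_, hex.choose_spec.1⟩) (a₂ := ⟨e, he⟩)
      (Subtype.ext hex.choose_spec.2))
  rw [step, dif_pos hex, hchoose]

theorem exists_step_eq_tgt (hsurj : ∀ I, Function.Surjective (outMap Φ I))
    {I : G.V} {a : H.E} (ha : H.src a = Φ.vMap I) :
    ∃ e : G.E, G.src e = I ∧ Φ.eMap e = a ∧ step Φ I a = G.tgt e := by
  have hex : ∃ e : G.E, G.src e = I ∧ Φ.eMap e = a := by
    obtain ⟨⟨e, he⟩, hea⟩ := hsurj I ⟨a, ha⟩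
    exact ⟨e, he, congrArg Subtype.val hea⟩
  exact ⟨hex.choose, hex.choose_spec.1, hex.choose_spec.2, by rw [step, dif_pos hex]⟩

theorem vMap_transPath (hsurj : ∀ I, Function.Surjective (outMap Φ I))
    {I : G.V} {u : List H.E} (hu : IsPathFrom H (Φ.vMap I) u) :
    Φ.vMap (transPath Φ I u) = pathEnd H (Φ.vMap I) u := by
  induction u generalizing I with
  | nil => rfl
  | cons a u ih =>
    obtain ⟨e, -, rfl, hstep⟩ := exists_step_eq_tgt Φ hsurj hu.1
    have hvMap : Φ.vMap (step Φ I (Φ.eMap e)) = H.tgt (Φ.eMap e) := by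
      rw [hstep, Φ.tgt_eq]
    change Φ.vMap (transPath Φ (step Φ I (Φ.eMap e)) u) = pathEnd H (H.tgt (Φ.eMap e)) u
    rw [ih (hvMap ▸ hu.2), hvMap]

theorem exists_lift_path (hsurj : ∀ I, Function.Surjective (outMap Φ I))
    {I : G.V} {w : List H.E} (hw : IsPathFrom H (Φ.vMap I) w) :
    ∃ v : List G.E, IsPathFrom G I v ∧ v.map Φ.eMap = w := by
  induction w generalizing I with
  | nil => exact ⟨[], trivial, rfl⟩
  | cons a w ih =>
    obtain ⟨e, he, rfl, -⟩ := exists_step_eq_tgt Φ hsurj hw.1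
    obtain ⟨v, hv, rfl⟩ := ih (I := G.tgt e) (Φ.tgt_eq e ▸ hw.2)
    exact ⟨e :: v, ⟨he, hv⟩, rfl⟩

variable {Φ} in
theorem Synchronizing.exists_transPath_eq (hs : Synchronizing Φ) {J J' : G.V}
    (h : Φ.vMap J = Φ.vMap J') :
    ∃ w : List H.E, IsPathFrom H (Φ.vMap J) w ∧ transPath Φ J w = transPath Φ J' w :=
  (hs J J' h).2 [] trivial

end Paths

/-- `C` is isomorphic, via `(π, θ)`, to a principal subgraph of the fiber product of `Φ₁` and
`Φ₂`. -/
structure IsPrincipalInFiberProd {C G₁ G₂ K : FinGraph} (π : GHom C G₁) (θ : GHom C G₂)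
    (Φ₁ : GHom G₁ K) (Φ₂ : GHom G₂ K) : Prop where
  comm_eMap : ∀ e, Φ₁.eMap (π.eMap e) = Φ₂.eMap (θ.eMap e)
  comm_vMap : ∀ p, Φ₁.vMap (π.vMap p) = Φ₂.vMap (θ.vMap p)
  vMap_ext : ∀ p q, π.vMap p = π.vMap q → θ.vMap p = θ.vMap q → p = q
  eMap_ext : ∀ e e', π.eMap e = π.eMap e' → θ.eMap e = θ.eMap e' → e = e'
  exists_out_edge : ∀ p a b, G₁.src a = π.vMap p → G₂.src b = θ.vMap p →
    Φ₁.eMap a = Φ₂.eMap b → ∃ e, C.src e = p ∧ π.eMap e = a ∧ θ.eMap e = b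

namespace IsPrincipalInFiberProd

variable {C G₁ G₂ K : FinGraph} {π : GHom C G₁} {θ : GHom C G₂}
  {Φ₁ : GHom G₁ K} {Φ₂ : GHom G₂ K}

theorem symm (hC : IsPrincipalInFiberProd π θ Φ₁ Φ₂) : IsPrincipalInFiberProd θ π Φ₂ Φ₁ where
  comm_eMap e := (hC.comm_eMap e).symm
  comm_vMap p := (hC.comm_vMap p).symm
  vMap_ext p q hθ hπ := hC.vMap_ext p q hπ hθ
  eMap_ext e e' hθ hπ := hC.eMap_ext e e' hπ hθ
  exists_out_edge p b a hb ha hab := by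
    obtain ⟨e, he, hπe, hθe⟩ := hC.exists_out_edge p a b ha hb hab.symm
    exact ⟨e, he, hθe, hπe⟩

theorem outMap_bijective (hC : IsPrincipalInFiberProd π θ Φ₁ Φ₂)
    (h₂ : ∀ J, Function.Bijective (outMap Φ₂ J)) (p : C.V) :
    Function.Bijective (outMap π p) := by
  constructor
  · rintro ⟨e, he⟩ ⟨e', he'⟩ hee'
    have hπ : π.eMap e = π.eMap e' := congrArg Subtype.val hee'
    have hθsrc : ∀ {f}, C.src f = p → G₂.src (θ.eMap f) = θ.vMap p := fun hf => by
      rw [θ.src_eq, hf]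
    have hθ : θ.eMap e = θ.eMap e' := congrArg Subtype.val <|
      (h₂ (θ.vMap p)).1 (a₁ := ⟨_, hθsrc he⟩) (a₂ := ⟨_, hθsrc he'⟩) <|
        Subtype.ext (by simp only [outMap, ← hC.comm_eMap, hπ])
    exact Subtype.ext (hC.eMap_ext e e' hπ hθ)
  · rintro ⟨a, ha⟩
    have hΦa : K.src (Φ₁.eMap a) = Φ₂.vMap (θ.vMap p) := by
      rw [Φ₁.src_eq, ha, hC.comm_vMap]
    obtain ⟨⟨b, hb⟩, hba⟩ := (h₂ (θ.vMap p)).2 ⟨Φ₁.eMap a, hΦa⟩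
    obtain ⟨e, he, hπe, -⟩ :=
      hC.exists_out_edge p a b ha hb (congrArg Subtype.val hba).symm
    exact ⟨⟨e, he⟩, Subtype.ext hπe⟩

theorem vMap_transPath_snd (hC : IsPrincipalInFiberProd π θ Φ₁ Φ₂)
    (hπ : ∀ p, Function.Surjective (outMap π p))
    (h₂ : ∀ J, Function.Injective (outMap Φ₂ J))
    {p : C.V} {u : List G₁.E} (hu : IsPathFrom G₁ (π.vMap p) u) :
    θ.vMap (transPath π p u) = transPath Φ₂ (θ.vMap p) (u.map Φ₁.eMap) := by
  induction u generalizing p with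
  | nil => rfl
  | cons a u ih =>
    obtain ⟨e, he, rfl, hstep⟩ := exists_step_eq_tgt π hπ hu.1
    have hθstep : θ.vMap (step π p (π.eMap e)) = step Φ₂ (θ.vMap p) (Φ₁.eMap (π.eMap e)) := by
      rw [hstep, ← θ.tgt_eq, hC.comm_eMap,
        step_eq_tgt Φ₂ h₂ (by rw [θ.src_eq, he])]
    have hπstep : π.vMap (step π p (π.eMap e)) = G₁.tgt (π.eMap e) := by
      rw [hstep, π.tgt_eq]
    change θ.vMap (transPath π (step π p (π.eMap e)) u) =
      transPath Φ₂ (step Φ₂ (θ.vMap p) (Φ₁.eMap (π.eMap e))) (u.map Φ₁.eMap)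
    rw [← hθstep]
    exact ih (hπstep ▸ hu.2)

theorem synchronizing (hC : IsPrincipalInFiberProd π θ Φ₁ Φ₂)
    (h₁ : ∀ I, Function.Surjective (outMap Φ₁ I))
    (h₂ : ∀ J, Function.Bijective (outMap Φ₂ J)) (hs₂ : Synchronizing Φ₂) :
    Synchronizing π := by
  intro p q hpq
  refine ⟨hpq, fun u hu => ?_⟩
  have hπ p := (hC.outMap_bijective h₂ p).2
  have hθ {r : C.V} {u' : List G₁.E} (hu' : IsPathFrom G₁ (π.vMap r) u') :=
    hC.vMap_transPath_snd hπ (fun J => (h₂ J).1) hu'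
  have hu' : IsPathFrom G₁ (π.vMap q) u := hpq ▸ hu
  have hend : Φ₂.vMap (θ.vMap (transPath π p u)) = Φ₁.vMap (pathEnd G₁ (π.vMap p) u) := by
    rw [← hC.comm_vMap, vMap_transPath π hπ hu]
  have hfiber : Φ₂.vMap (θ.vMap (transPath π p u)) = Φ₂.vMap (θ.vMap (transPath π q u)) := by
    rw [hend, ← hC.comm_vMap, vMap_transPath π hπ hu', hpq]
  obtain ⟨w, hw, hsync⟩ := hs₂.exists_transPath_eq hfiber
  obtain ⟨v, hv, rfl⟩ := exists_lift_path Φ₁ h₁ (hend ▸ hw)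
  have huv : IsPathFrom G₁ (π.vMap p) (u ++ v) := hu.append hv
  have huv' : IsPathFrom G₁ (π.vMap q) (u ++ v) := hpq ▸ huv
  refine ⟨v, hv, hC.vMap_ext _ _ ?_ ?_⟩
  · rw [vMap_transPath π hπ huv, vMap_transPath π hπ huv', hpq]
  · rw [hθ huv, hθ huv', List.map_append, transPath_append, transPath_append, ← hθ hu,
      ← hθ hu', hsync]

end IsPrincipalInFiberProd

theorem isPrincipalInFiberProd_restrict {G₁ G₂ K : FinGraph} (Φ₁ : GHom G₁ K) (Φ₂ : GHom G₂ K)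
    (S : Set (fiberProd Φ₁ Φ₂).V)
    (hS : ∀ e : (fiberProd Φ₁ Φ₂).E,
      (fiberProd Φ₁ Φ₂).src e ∈ S → (fiberProd Φ₁ Φ₂).tgt e ∈ S) :
    IsPrincipalInFiberProd ((fpProj₁ Φ₁ Φ₂).comp (inclHom (fiberProd Φ₁ Φ₂) S hS))
      ((fpProj₂ Φ₁ Φ₂).comp (inclHom (fiberProd Φ₁ Φ₂) S hS)) Φ₁ Φ₂ where
  comm_eMap e := e.1.2
  comm_vMap p := p.1.2
  vMap_ext _ _ h₁ h₂ := Subtype.ext (Subtype.ext (Prod.ext h₁ h₂))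
  eMap_ext _ _ h₁ h₂ := Subtype.ext (Subtype.ext (Prod.ext h₁ h₂))
  exists_out_edge p a b ha hb hab := by
    have hsrc : (fiberProd Φ₁ Φ₂).src ⟨(a, b), hab⟩ = p.1 := Subtype.ext (Prod.ext ha hb)
    exact ⟨⟨⟨(a, b), hab⟩, hsrc ▸ p.2⟩, Subtype.ext hsrc, rfl, rfl⟩

/-- a principal subgraph of the fiber product of two
synchronizers, which projects onto the states of each factor, is a common
synchronizing extension via the restricted projections. -/
theorem fiberProd_principal_sync {G₁ G₂ K : FinGraph}
    (Φ₁ : GHom G₁ K) (Φ₂ : GHom G₂ K)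
    (h₁ : IsRR Φ₁) (h₂ : IsRR Φ₂)
    (hs₁ : Synchronizing Φ₁) (hs₂ : Synchronizing Φ₂)
    (S : Set (fiberProd Φ₁ Φ₂).V)
    (hS : ∀ e : (fiberProd Φ₁ Φ₂).E,
      (fiberProd Φ₁ Φ₂).src e ∈ S → (fiberProd Φ₁ Φ₂).tgt e ∈ S)
    (hsurj₁ : Function.Surjective
      (GHom.vMap ((fpProj₁ Φ₁ Φ₂).comp (inclHom (fiberProd Φ₁ Φ₂) S hS))))
    (hsurj₂ : Function.Surjective
      (GHom.vMap ((fpProj₂ Φ₁ Φ₂).comp (inclHom (fiberProd Φ₁ Φ₂) S hS)))) :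
    (IsRR ((fpProj₁ Φ₁ Φ₂).comp (inclHom (fiberProd Φ₁ Φ₂) S hS)) ∧
      Synchronizing ((fpProj₁ Φ₁ Φ₂).comp (inclHom (fiberProd Φ₁ Φ₂) S hS))) ∧
    (IsRR ((fpProj₂ Φ₁ Φ₂).comp (inclHom (fiberProd Φ₁ Φ₂) S hS)) ∧
      Synchronizing ((fpProj₂ Φ₁ Φ₂).comp (inclHom (fiberProd Φ₁ Φ₂) S hS))) := by
  have hC := isPrincipalInFiberProd_restrict Φ₁ Φ₂ S hS
  exact ⟨⟨⟨hsurj₁, hC.outMap_bijective h₂.2⟩, hC.synchronizing (fun I => (h₁.2 I).2) h₂.2 hs₂⟩,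
    ⟨hsurj₂, hC.symm.outMap_bijective h₁.2⟩, hC.symm.synchronizing (fun J => (h₂.2 J).2) h₁.2 hs₁⟩
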